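/- arXiv:1607.03800 — 2 statements merged into one kernel-verified Lean document; each statement's English description precedes it below -/
import Mathlib

section
/- Let 𝕄 = (π, M, B, F, f, h) be a connected filled bundle. Then the map c_M : B_M → B, sending a connected component of π⁻¹(p) to p, is a covering map, and Rls π : M → B_M, sending a point of π⁻¹(p) to the connected component of π⁻¹(p) containing it, is the projection of a smooth fiber bundle with connected fiber over the connected base B_M. -/
/-!
Pelayo–Tang, Lemma 2.14 (the release of a connected filled bundle).  The base `B_M` of
the release is formalized as the quotient of `M` identifying two points iff they lie in
the same fiber of `π` and in the same connected component of that fiber; it carries the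
canonical quotient topology (which agrees with the unique natural structure for which
the maps `λ_U` are homeomorphisms).  The claim is formalized at the topological level:
`c_M : B_M → B` is a covering map, `B_M` is connected, and `Rls π : M → B_M` is the
projection of a locally trivial fiber bundle with connected fibers whose model fiber
`F_M` is a connected component of `F`.
-/

open Topology Set MeasureTheory
open scoped Manifold ENNReal

noncomputable section

/-- The collection of connected components of a subset `s`. -/
def connCompsIn {X : Type*} [TopologicalSpace X] (s : Set X) : Set (Set X) :=
  {C | ∃ x ∈ s, C = connectedComponentIn s x}

/-- The unbounded (noncompact closure) connected components of `s`. -/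
def unbddCompsIn {X : Type*} [TopologicalSpace X] (s : Set X) : Set (Set X) :=
  {C | C ∈ connCompsIn s ∧ ¬ IsCompact (closure C)}

variable {E_B : Type*} [NormedAddCommGroup E_B] [NormedSpace ℝ E_B]
  {H_B : Type*} [TopologicalSpace H_B] (I_B : ModelWithCorners ℝ E_B H_B)
  {E_F : Type*} [NormedAddCommGroup E_F] [NormedSpace ℝ E_F]
  {H_F : Type*} [TopologicalSpace H_F] (I_F : ModelWithCorners ℝ E_F H_F)
  {E_M : Type*} [NormedAddCommGroup E_M] [NormedSpace ℝ E_M]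
  {H_M : Type*} [TopologicalSpace H_M] (I_M : ModelWithCorners ℝ E_M H_M)
  (B : Type*) [TopologicalSpace B] [ChartedSpace H_B B] [IsManifold I_B (⊤ : ℕ∞) B]
  (F : Type*) [TopologicalSpace F] [ChartedSpace H_F F] [IsManifold I_F (⊤ : ℕ∞) F]
  (M : Type*) [TopologicalSpace M] [ChartedSpace H_M M] [IsManifold I_M (⊤ : ℕ∞) M]

/-- A filled bundle `(π, M, B, F, f, h)`. -/
structure FilledBundle where
  π : M → B
  f : M → ℝ
  h : F → ℝ
  smooth_π : ContMDiff I_M I_B (⊤ : ℕ∞) π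
  smooth_f : ContMDiff I_M 𝓘(ℝ, ℝ) (⊤ : ℕ∞) f
  smooth_h : ContMDiff I_F 𝓘(ℝ, ℝ) (⊤ : ℕ∞) h
  atlas : Set (Bundle.Trivialization F π)
  atlas_smooth : ∀ t ∈ atlas, ContMDiffOn I_M (I_B.prod I_F) (⊤ : ℕ∞) (↑t) t.source
  atlas_smooth_symm : ∀ t ∈ atlas,
    ContMDiffOn (I_B.prod I_F) I_M (⊤ : ℕ∞) t.toOpenPartialHomeomorph.symm t.target
  atlas_covers : ∀ p : B, ∃ t ∈ atlas, p ∈ t.baseSet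
  /-- the structure group is contained in `Diff(F, h)`: the transition maps preserve `h` -/
  atlas_trans_h : ∀ t ∈ atlas, ∀ t' ∈ atlas, ∀ p : B, p ∈ t.baseSet → p ∈ t'.baseSet →
    ∀ y : F, h (t' (t.toOpenPartialHomeomorph.symm (p, y))).2 = h y
  /-- on each chart, `f = h ∘ pr₂ ∘ φ_U` -/
  atlas_filler : ∀ t ∈ atlas, ∀ x ∈ t.source, f x = h (t x).2

namespace FilledBundle

variable {I_B I_F I_M B F M}
variable (𝕄 : FilledBundle I_B I_F I_M B F M)

/-- `𝕄` is an exhausted bundle: `f` and `h` are exhaustion functions. -/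
def IsExhausted : Prop :=
  (∀ r : ℝ, IsCompact (𝕄.f ⁻¹' Iic r)) ∧ (∀ r : ℝ, IsCompact (𝕄.h ⁻¹' Iic r))

/-- `α` is a regular value of the filler `f` (including values not attained). -/
def IsRegularValue (α : ℝ) : Prop :=
  ∀ x : M, 𝕄.f x = α → mfderiv I_M 𝓘(ℝ, ℝ) 𝕄.f x ≠ 0

/-- `A` is a filled subspace of `𝕄`: in each chart of the atlas it has the form
`U × P` for some `P ⊆ F`. -/
def FilledSubspace (A : Set M) : Prop :=
  ∀ t ∈ 𝕄.atlas, ∃ P : Set F, (↑t : M → B × F) '' (A ∩ t.source) = t.baseSet ×ˢ P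

/-- The restriction `𝕄|_A` has connected fiber. -/
def HasConnectedFiber (A : Set M) : Prop :=
  ∀ t ∈ 𝕄.atlas, t.baseSet.Nonempty →
    IsConnected (Prod.snd '' ((↑t : M → B × F) '' (A ∩ t.source)))

variable [MeasurableSpace M] [BorelSpace M]

/-- A fiber volume form on `𝕄`, encoded through the family of fiberwise measures it
induces: a family `p ↦ (meas p)` of measures on `M`, each concentrated on the fiber
`π⁻¹(p)`, positive on open sets meeting the fiber and finite on compact sets, depending
smoothly on `p` in the sense of integration against compactly supported continuous test
functions.  Under this encoding `φ*ω = τ` for a (fiber) diffeomorphism `φ` becomes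
`Measure.map φ (τ.meas p) = ω.meas p` for all `p`. -/
structure FiberVolumeForm where
  meas : B → Measure M
  fiber_supported : ∀ p : B, meas p ((𝕄.π ⁻¹' {p})ᶜ) = 0
  open_pos : ∀ p : B, ∀ U : Set M, IsOpen U → (U ∩ 𝕄.π ⁻¹' {p}).Nonempty → meas p U ≠ 0
  finite_on_compacts : ∀ p : B, ∀ K : Set M, IsCompact K → meas p K < ⊤
  smooth_family : ∀ g : M → ℝ, Continuous g → HasCompactSupport g →
    ContMDiff I_B 𝓘(ℝ, ℝ) (⊤ : ℕ∞) fun p => ∫ x, g x ∂(meas p)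

end FilledBundle

namespace FilledBundle

variable {E_B : Type u_1} [NormedAddCommGroup E_B] [NormedSpace ℝ E_B]
  {H_B : Type u_2} [TopologicalSpace H_B] {I_B : ModelWithCorners ℝ E_B H_B}
  {E_F : Type u_3} [NormedAddCommGroup E_F] [NormedSpace ℝ E_F]
  {H_F : Type u_4} [TopologicalSpace H_F] {I_F : ModelWithCorners ℝ E_F H_F}
  {E_M : Type u_5} [NormedAddCommGroup E_M] [NormedSpace ℝ E_M]
  {H_M : Type u_6} [TopologicalSpace H_M] {I_M : ModelWithCorners ℝ E_M H_M}
  {B : Type u_7} [TopologicalSpace B] [ChartedSpace H_B B] [IsManifold I_B (⊤ : ℕ∞) B]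
  {F : Type u_8} [TopologicalSpace F] [ChartedSpace H_F F] [IsManifold I_F (⊤ : ℕ∞) F]
  {M : Type u_9} [TopologicalSpace M] [ChartedSpace H_M M] [IsManifold I_M (⊤ : ℕ∞) M]
  (𝕄 : FilledBundle I_B I_F I_M B F M)

/-- Two points of `M` are fiberwise-component equivalent if they lie in the same fiber
of `π` and in the same connected component of that fiber. -/
def fiberRel (x y : M) : Prop :=
  𝕄.π x = 𝕄.π y ∧ y ∈ connectedComponentIn (𝕄.π ⁻¹' {𝕄.π x}) x

/-- The base `B_M = ⨆_{p ∈ B} π₀(π⁻¹(p))` of the release of `𝕄`, with its canonical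
(quotient) topology. -/
def RlsBase : Type u_9 := Quot 𝕄.fiberRel

instance : TopologicalSpace 𝕄.RlsBase := instTopologicalSpaceQuot

/-- The projection `Rls π : M → B_M` of the release. -/
def rlsProj : M → 𝕄.RlsBase := Quot.mk 𝕄.fiberRel

/-- The covering `c_M : B_M → B`. -/
def rlsCover : 𝕄.RlsBase → B := Quot.lift 𝕄.π fun _ _ hxy => hxy.1

end FilledBundle

/-!
Write `p : E → X` for a map with local trivializations `p⁻¹(U) ≅ U × Y`, and
`FiberComponents p` for the set of connected components of its fibres. The fibre `Y` is locally
connected, since the model space of a manifold with corners is a retract of a normed space.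
Over a trivializing set `U`, two points of `p⁻¹(U)` lie in the same fibre component iff they
have the same `U`-coordinate and their `Y`-coordinates lie in the same component of `Y`. Hence
the restriction of `mk : E → FiberComponents p` to `p⁻¹(U)` and the map
`p⁻¹(U) ≅ U × Y → U × π₀(Y)` are quotient maps with the same fibres; this identifies
`proj⁻¹(U)` with `U × π₀(Y)`, where `π₀(Y)` is discrete, so `proj` is a covering map. The sheet
over `U` labelled by a component `C` of `Y` pulls back under `mk` to `U × C`, so `mk` is locally
trivial with fibre a component of `Y`. The homeomorphism type of the fibre component through a
point is therefore locally constant on `E`, hence constant when `E` is connected.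
-/

theorem Function.LeftInverse.locallyConnectedSpace {X Y : Type*} [TopologicalSpace X]
    [TopologicalSpace Y] [LocallyConnectedSpace X] {i : Y → X} {r : X → Y}
    (h : Function.LeftInverse r i) (hi : Continuous i) (hr : Continuous r) :
    LocallyConnectedSpace Y := by
  rw [locallyConnectedSpace_iff_connected_subsets]
  intro y U hU
  have hrU : r ⁻¹' U ∈ 𝓝 (i y) := hr.continuousAt.preimage_mem_nhds (by rwa [h y])
  set W := connectedComponentIn (interior (r ⁻¹' U)) (i y)
  have hyW : i y ∈ W := mem_connectedComponentIn (mem_interior_iff_mem_nhds.2 hrU)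
  refine ⟨r '' W, ?_, isPreconnected_connectedComponentIn.image _ hr.continuousOn, ?_⟩
  · refine Filter.mem_of_superset
      ((isOpen_interior.connectedComponentIn.preimage hi).mem_nhds hyW) ?_
    exact fun z hz => ⟨i z, hz, h z⟩
  · exact (image_mono ((connectedComponentIn_subset _ _).trans interior_subset)).trans
      (image_preimage_subset _ _)

theorem ModelWithCorners.locallyConnectedSpace {𝕜 : Type*} [NontriviallyNormedField 𝕜]
    {E : Type*} [NormedAddCommGroup E] [NormedSpace 𝕜 E] [LocallyConnectedSpace E]
    {H : Type*} [TopologicalSpace H] (I : ModelWithCorners 𝕜 E H) : LocallyConnectedSpace H :=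
  I.leftInverse.locallyConnectedSpace I.continuous I.continuous_symm

theorem ConnectedComponents.isOpenQuotientMap_mk {Y : Type*} [TopologicalSpace Y]
    [LocallyConnectedSpace Y] : IsOpenQuotientMap (ConnectedComponents.mk : Y → _) :=
  ⟨ConnectedComponents.surjective_coe, ConnectedComponents.continuous_coe,
    fun _ _ => isOpen_discrete _⟩

def Topology.IsQuotientMap.homeomorphOfKerEq {X Y Z : Type*} [TopologicalSpace X]
    [TopologicalSpace Y] [TopologicalSpace Z] {f : X → Y} {g : X → Z} (hf : IsQuotientMap f)
    (hg : IsQuotientMap g) (hfg : ∀ a b, f a = f b ↔ g a = g b) : Y ≃ₜ Z where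
  toFun y := g (Function.surjInv hf.surjective y)
  invFun z := f (Function.surjInv hg.surjective z)
  left_inv y := ((hfg _ _).2 (Function.surjInv_eq hg.surjective _)).trans
    (Function.surjInv_eq hf.surjective y)
  right_inv z := ((hfg _ _).1 (Function.surjInv_eq hf.surjective _)).trans
    (Function.surjInv_eq hg.surjective z)
  continuous_toFun := hf.continuous_iff.2 <| hg.continuous.congr fun a =>
    ((hfg _ _).1 (Function.surjInv_eq hf.surjective (f a))).symm
  continuous_invFun := hg.continuous_iff.2 <| hf.continuous.congr fun a =>
    ((hfg _ _).2 (Function.surjInv_eq hg.surjective (g a))).symm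

theorem Topology.IsQuotientMap.homeomorphOfKerEq_apply {X Y Z : Type*} [TopologicalSpace X]
    [TopologicalSpace Y] [TopologicalSpace Z] {f : X → Y} {g : X → Z} (hf : IsQuotientMap f)
    (hg : IsQuotientMap g) (hfg : ∀ a b, f a = f b ↔ g a = g b) (a : X) :
    hf.homeomorphOfKerEq hg hfg (f a) = g a :=
  (hfg _ _).1 (Function.surjInv_eq hf.surjective (f a))

section FiberComponents

variable {X Y E : Type*} [TopologicalSpace E] {p : E → X}

def fiberComponent (p : E → X) (x : E) : Set E := connectedComponentIn (p ⁻¹' {p x}) x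

theorem mem_fiberComponent_self (x : E) : x ∈ fiberComponent p x :=
  mem_connectedComponentIn rfl

theorem fiberComponent_subset (x : E) : fiberComponent p x ⊆ p ⁻¹' {p x} :=
  connectedComponentIn_subset _ _

theorem fiberComponent_eq {x y : E} (h : y ∈ fiberComponent p x) :
    fiberComponent p y = fiberComponent p x := by
  have hy : p y = p x := fiberComponent_subset x h
  rw [fiberComponent, fiberComponent, hy, connectedComponentIn_eq h]

theorem fiberComponent_eq_iff {x y : E} :
    fiberComponent p y = fiberComponent p x ↔ y ∈ fiberComponent p x :=
  ⟨fun h => h ▸ mem_fiberComponent_self y, fiberComponent_eq⟩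

theorem isConnected_fiberComponent (x : E) : IsConnected (fiberComponent p x) :=
  isConnected_connectedComponentIn_iff.2 rfl

variable (p) in
def FiberComponents.Rel (x y : E) : Prop := p x = p y ∧ y ∈ fiberComponent p x

variable (p) in
/-- For `p = 𝕄.π` this is `𝕄.RlsBase` by definition, with `mk p = 𝕄.rlsProj` and
`proj p = 𝕄.rlsCover`. -/
def FiberComponents : Type _ := Quot (FiberComponents.Rel p)

namespace FiberComponents

instance : TopologicalSpace (FiberComponents p) := instTopologicalSpaceQuot

variable (p) in
def mk : E → FiberComponents p := Quot.mk _

variable (p) in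
def proj : FiberComponents p → X := Quot.lift p fun _ _ h => h.1

theorem rel_iff {x y : E} : Rel p x y ↔ fiberComponent p x = fiberComponent p y :=
  ⟨fun h => (fiberComponent_eq h.2).symm, fun h =>
    ⟨(fiberComponent_subset x (fiberComponent_eq_iff.1 h.symm)).symm,
      fiberComponent_eq_iff.1 h.symm⟩⟩

theorem mk_eq_mk_iff {x y : E} : mk p y = mk p x ↔ y ∈ fiberComponent p x := by
  have hequiv : Equivalence (Rel p) := by
    refine ⟨fun x => rel_iff.2 rfl, fun h => rel_iff.2 (rel_iff.1 h).symm, fun h h' => ?_⟩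
    exact rel_iff.2 ((rel_iff.1 h).trans (rel_iff.1 h'))
  exact Quot.eq.trans <| hequiv.eqvGen_iff.trans <| rel_iff.trans fiberComponent_eq_iff

@[simp]
theorem proj_mk (x : E) : proj p (mk p x) = p x := rfl

theorem mk_surjective : Function.Surjective (mk p) := Quot.mk_surjective

theorem preimage_mk_singleton (x : E) : mk p ⁻¹' {mk p x} = fiberComponent p x :=
  Set.ext fun _ => mk_eq_mk_iff

theorem isConnected_preimage_mk_singleton (b : FiberComponents p) :
    IsConnected (mk p ⁻¹' {b}) := by
  obtain ⟨x, rfl⟩ := mk_surjective b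
  exact preimage_mk_singleton x ▸ isConnected_fiberComponent x

theorem isQuotientMap_mk : IsQuotientMap (mk p) := isQuotientMap_quot_mk

instance [ConnectedSpace E] : ConnectedSpace (FiberComponents p) :=
  mk_surjective.connectedSpace isQuotientMap_mk.continuous

theorem isOpen_preimage_proj {s : Set X} : IsOpen (proj p ⁻¹' s) ↔ IsOpen (p ⁻¹' s) :=
  isQuotientMap_mk.isOpen_preimage.symm

theorem isQuotientMap_mk_restrict {s : Set X} (hs : IsOpen (p ⁻¹' s)) :
    IsQuotientMap fun z : p ⁻¹' s => (⟨mk p z, z.2⟩ : proj p ⁻¹' s) :=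
  isQuotientMap_quot_mk.restrictPreimage_isOpen (isOpen_preimage_proj.2 hs)

end FiberComponents

variable [TopologicalSpace X] [TopologicalSpace Y]

namespace Bundle.Trivialization

variable (t : Trivialization Y p)

theorem fiberComponent_eq_image {x : E} (hx : p x ∈ t.baseSet) :
    fiberComponent p x =
      (fun y => t.toOpenPartialHomeomorph.symm (p x, y)) '' connectedComponent (t x).2 := by
  set φ := t.preimageSingletonHomeomorph hx
  have hφx : φ.symm (t x).2 = ⟨x, rfl⟩ := φ.symm_apply_eq.2 rfl
  have hcomp : φ.symm '' connectedComponent (t x).2 = connectedComponent ⟨x, rfl⟩ := by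
    rw [← connectedComponentIn_univ, φ.symm.image_connectedComponentIn (mem_univ _), image_univ,
      Homeomorph.range_coe, connectedComponentIn_univ, hφx]
  rw [fiberComponent, connectedComponentIn_eq_image (show x ∈ p ⁻¹' {p x} from rfl), ← hcomp,
    image_image]
  rfl

theorem mem_fiberComponent_iff {x : E} (hx : p x ∈ t.baseSet) {y : E} :
    y ∈ fiberComponent p x ↔ p y = p x ∧ (t y).2 ∈ connectedComponent (t x).2 := by
  rw [t.fiberComponent_eq_image hx]
  constructor
  · rintro ⟨z, hz, rfl⟩
    exact ⟨t.proj_symm_apply' hx, by rwa [t.apply_symm_apply' hx]⟩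
  · rintro ⟨hyx, hy⟩
    refine ⟨(t y).2, hy, ?_⟩
    rw [← hyx]
    exact t.symm_apply_mk_proj (t.mem_source.2 (hyx ▸ hx))

def fiberComponentHomeomorph {x : E} (hx : p x ∈ t.baseSet) :
    fiberComponent p x ≃ₜ connectedComponent (t x).2 :=
  (Homeomorph.setCongr (t.fiberComponent_eq_image hx)).trans
    (IsEmbedding.subtypeVal.comp (t.preimageSingletonHomeomorph hx).symm.isEmbedding
      |>.homeomorphImage _).symm

end Bundle.Trivialization

namespace FiberComponents

variable (t : Bundle.Trivialization Y p)

theorem mk_eq_mk_iff_of_mem_baseSet {x y : E} (hx : p x ∈ t.baseSet) :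
    mk p y = mk p x ↔
      p y = p x ∧ ConnectedComponents.mk (t y).2 = ConnectedComponents.mk (t x).2 := by
  rw [mk_eq_mk_iff, t.mem_fiberComponent_iff hx, ConnectedComponents.coe_eq_coe']

def preimageProjHomeomorph [LocallyConnectedSpace Y] :
    proj p ⁻¹' t.baseSet ≃ₜ t.baseSet × ConnectedComponents Y :=
  IsQuotientMap.homeomorphOfKerEq (isQuotientMap_mk_restrict (t.source_eq ▸ t.open_source))
    (g := Prod.map id ConnectedComponents.mk ∘ t.preimageHomeomorph subset_rfl)
    ((IsOpenQuotientMap.id.prodMap ConnectedComponents.isOpenQuotientMap_mk).isQuotientMap.comp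
      (t.preimageHomeomorph subset_rfl).isQuotientMap)
    (fun a b => Subtype.ext_iff.trans <| (mk_eq_mk_iff_of_mem_baseSet t b.2).trans <| by
      simp [Prod.ext_iff, Subtype.ext_iff])

theorem preimageProjHomeomorph_fst [LocallyConnectedSpace Y] (b : proj p ⁻¹' t.baseSet) :
    ((preimageProjHomeomorph t b).1 : X) = proj p b := by
  obtain ⟨a, rfl⟩ := (isQuotientMap_mk_restrict (t.source_eq ▸ t.open_source)).surjective b
  rw [preimageProjHomeomorph, IsQuotientMap.homeomorphOfKerEq_apply]
  show ((t.preimageHomeomorph subset_rfl a).1 : X) = p a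
  rw [t.preimageHomeomorph_apply]

theorem isCoveringMap_proj [LocallyConnectedSpace Y]
    (h : ∀ x : X, ∃ t : Bundle.Trivialization Y p, x ∈ t.baseSet) : IsCoveringMap (proj p) :=
  fun x =>
    let ⟨t, hx⟩ := h x
    IsEvenlyCovered.to_isEvenlyCovered_preimage ⟨inferInstance, t.baseSet, hx, t.open_baseSet,
      isOpen_preimage_proj.2 (t.source_eq ▸ t.open_source), preimageProjHomeomorph t,
      preimageProjHomeomorph_fst t⟩

theorem continuousOn_proj : ContinuousOn (proj p) (proj p ⁻¹' t.baseSet) := by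
  rw [continuousOn_iff_continuous_domRestrict]
  refine (isQuotientMap_mk_restrict (t.source_eq ▸ t.open_source)).continuous_iff.2 ?_
  exact t.continuousOn_proj.comp_continuous continuous_subtype_val fun z => t.mem_source.2 z.2

def sheet (y : Y) : Set (FiberComponents p) :=
  mk p '' {z | p z ∈ t.baseSet ∧ (t z).2 ∈ connectedComponent y}

variable {t}

theorem mem_preimage_mk_sheet {y : Y} {z : E} :
    z ∈ mk p ⁻¹' sheet t y ↔ p z ∈ t.baseSet ∧ (t z).2 ∈ connectedComponent y := by
  refine ⟨?_, fun hz => ⟨z, hz, rfl⟩⟩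
  rintro ⟨w, ⟨hw, hwy⟩, hwz⟩
  obtain ⟨hzw, hcomp⟩ := (mk_eq_mk_iff_of_mem_baseSet t hw).1 hwz.symm
  refine ⟨hzw ▸ hw, ?_⟩
  rw [ConnectedComponents.coe_eq_coe'] at hcomp
  rw [connectedComponent_eq hwy, connectedComponent_eq hcomp]
  exact mem_connectedComponent

theorem proj_mem_baseSet_of_mem_sheet {y : Y} {b : FiberComponents p} (hb : b ∈ sheet t y) :
    proj p b ∈ t.baseSet := by
  obtain ⟨z, hz, rfl⟩ := hb
  exact hz.1

theorem mk_mem_sheet {x : E} (hx : p x ∈ t.baseSet) : mk p x ∈ sheet t (t x).2 :=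
  ⟨x, ⟨hx, mem_connectedComponent⟩, rfl⟩

theorem isOpen_sheet [LocallyConnectedSpace Y] (y : Y) : IsOpen (sheet t y) := by
  have hpre : mk p ⁻¹' sheet t y = t.source ∩ (fun z => (t z).2) ⁻¹' connectedComponent y :=
    Set.ext fun z => mem_preimage_mk_sheet.trans (by rw [mem_inter_iff, t.mem_source]; rfl)
  refine isQuotientMap_mk.isOpen_preimage.1 (hpre ▸ ?_)
  exact (continuous_snd.comp_continuousOn t.toOpenPartialHomeomorph.continuousOn)
    |>.isOpen_inter_preimage t.open_source isOpen_connectedComponent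

theorem mk_symm_of_mem_sheet {y y' : Y} {b : FiberComponents p} (hb : b ∈ sheet t y)
    (hy' : y' ∈ connectedComponent y) :
    mk p (t.toOpenPartialHomeomorph.symm (proj p b, y')) = b := by
  obtain ⟨z, ⟨hz, hzy⟩, rfl⟩ := hb
  refine (mk_eq_mk_iff_of_mem_baseSet t hz).2 ⟨t.proj_symm_apply' hz, ?_⟩
  rw [proj_mk, t.apply_symm_apply' hz, ConnectedComponents.coe_eq_coe',
    ← connectedComponent_eq hzy]
  exact hy'

variable (t) in
def preimageSheetHomeomorph (y : Y) :
    mk p ⁻¹' sheet t y ≃ₜ sheet t y × connectedComponent y where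
  toFun z := (⟨mk p z, z.2⟩, ⟨(t z).2, (mem_preimage_mk_sheet.1 z.2).2⟩)
  invFun w := ⟨t.toOpenPartialHomeomorph.symm (proj p w.1, w.2), by
    rw [mem_preimage, mk_symm_of_mem_sheet w.1.2 w.2.2]
    exact w.1.2⟩
  left_inv z :=
    Subtype.ext <| t.symm_apply_mk_proj (t.mem_source.2 (mem_preimage_mk_sheet.1 z.2).1)
  right_inv w := Prod.ext (Subtype.ext (mk_symm_of_mem_sheet w.1.2 w.2.2))
    (Subtype.ext (congrArg Prod.snd (t.apply_symm_apply' (proj_mem_baseSet_of_mem_sheet w.1.2))))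
  continuous_toFun :=
    ((isQuotientMap_mk.continuous.comp continuous_subtype_val).subtype_mk _).prodMk <|
      ((continuous_snd.comp_continuousOn t.toOpenPartialHomeomorph.continuousOn).comp_continuous
        continuous_subtype_val fun z => t.mem_source.2 (mem_preimage_mk_sheet.1 z.2).1).subtype_mk _
  continuous_invFun := by
    refine (t.toOpenPartialHomeomorph.continuousOn_symm.comp_continuous ?_ fun w =>
      t.mem_target.2 (proj_mem_baseSet_of_mem_sheet w.1.2)).subtype_mk _
    refine Continuous.prodMk ?_ (continuous_subtype_val.comp continuous_snd)
    exact (continuousOn_proj t).comp_continuous (continuous_subtype_val.comp continuous_fst)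
      fun w => proj_mem_baseSet_of_mem_sheet w.1.2

theorem exists_homeomorph_preimage_mk [LocallyConnectedSpace Y] {x : E}
    (hx : p x ∈ t.baseSet) :
    ∃ V : Set (FiberComponents p), IsOpen V ∧ mk p x ∈ V ∧
      ∃ e : mk p ⁻¹' V ≃ₜ V × fiberComponent p x, ∀ z, ((e z).1 : FiberComponents p) = mk p z :=
  ⟨sheet t (t x).2, isOpen_sheet _, mk_mem_sheet hx,
    (preimageSheetHomeomorph t _).trans
      ((Homeomorph.refl _).prodCongr (t.fiberComponentHomeomorph hx).symm), fun _ => rfl⟩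

theorem nonempty_homeomorph_fiberComponent [PreconnectedSpace E] [LocallyConnectedSpace Y]
    (h : ∀ b : X, ∃ t : Bundle.Trivialization Y p, b ∈ t.baseSet) (x x' : E) :
    Nonempty (fiberComponent p x ≃ₜ fiberComponent p x') := by
  suffices hconst :
      IsLocallyConstant fun z => Nonempty (fiberComponent p z ≃ₜ fiberComponent p x') by
    exact (hconst.apply_eq_of_preconnectedSpace x x').mpr ⟨Homeomorph.refl _⟩
  refine (IsLocallyConstant.iff_eventually_eq _).2 fun z => ?_
  obtain ⟨t, hz⟩ := h (p z)
  filter_upwards [((isOpen_sheet (t z).2).preimage isQuotientMap_mk.continuous).mem_nhds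
    (mk_mem_sheet hz)] with w hw
  obtain ⟨hw, hwz⟩ := mem_preimage_mk_sheet.1 hw
  have e : fiberComponent p w ≃ₜ fiberComponent p z :=
    (t.fiberComponentHomeomorph hw).trans <| (Homeomorph.setCongr (connectedComponent_eq hwz).symm)
      |>.trans (t.fiberComponentHomeomorph hz).symm
  exact propext ⟨fun ⟨e'⟩ => ⟨e.symm.trans e'⟩, fun ⟨e'⟩ => ⟨e.trans e'⟩⟩

end FiberComponents

end FiberComponents

/-- **Lemma 2.14.**  Let `𝕄 = (π, M, B, F, f, h)` be a connected filled bundle.  Then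
`c_M : B_M → B` is a covering map, and `Rls π : M → B_M` is the projection of a fiber
bundle with connected fiber (a connected component `F_M` of `F`) over the connected
base `B_M`. -/
theorem release_covering_and_bundle
    (𝕄 : FilledBundle I_B I_F I_M B F M) [ConnectedSpace M] :
    IsCoveringMap 𝕄.rlsCover ∧
    ConnectedSpace 𝕄.RlsBase ∧
    (∀ b : 𝕄.RlsBase, IsConnected (𝕄.rlsProj ⁻¹' {b})) ∧
    ∃ F_M : Set F, F_M ∈ connCompsIn (Set.univ : Set F) ∧
      ∀ b₀ : 𝕄.RlsBase, ∃ V : Set 𝕄.RlsBase, IsOpen V ∧ b₀ ∈ V ∧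
        ∃ e : (𝕄.rlsProj ⁻¹' V : Set M) ≃ₜ (V × F_M),
          ∀ z : (𝕄.rlsProj ⁻¹' V : Set M), ((e z).1 : 𝕄.RlsBase) = 𝕄.rlsProj (z : M) := by
  have : LocallyConnectedSpace H_F := I_F.locallyConnectedSpace
  have : LocallyConnectedSpace F := ChartedSpace.locallyConnectedSpace H_F F
  have hcov : ∀ b : B, ∃ t : Bundle.Trivialization F 𝕄.π, b ∈ t.baseSet :=
    fun b => (𝕄.atlas_covers b).imp fun _ ht => ht.2
  obtain ⟨x₀⟩ : Nonempty M := inferInstance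
  obtain ⟨t₀, hx₀⟩ := hcov (𝕄.π x₀)
  refine ⟨FiberComponents.isCoveringMap_proj hcov,
    inferInstanceAs (ConnectedSpace (FiberComponents 𝕄.π)),
    FiberComponents.isConnected_preimage_mk_singleton, connectedComponent (t₀ x₀).2,
    ⟨_, mem_univ _, (connectedComponentIn_univ _).symm⟩, fun b₀ => ?_⟩
  obtain ⟨x, rfl⟩ := FiberComponents.mk_surjective (p := 𝕄.π) b₀
  obtain ⟨t, hx⟩ := hcov (𝕄.π x)
  obtain ⟨V, hV, hxV, e, he⟩ := FiberComponents.exists_homeomorph_preimage_mk hx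
  obtain ⟨ψ⟩ := FiberComponents.nonempty_homeomorph_fiberComponent hcov x x₀
  exact ⟨V, hV, hxV,
    e.trans ((Homeomorph.refl V).prodCongr (ψ.trans (t₀.fiberComponentHomeomorph hx₀))), he⟩
end
end

section
/- Let X be a locally connected, locally compact Hausdorff space, and let A, A′ ⊂ X be connected precompact subsets lying in the same connected component C of X. Then there exists a compact subset L of X with A ∪ A′ ⊂ L such that A and A′ lie in the same connected component of L ∩ C. -/
/-!
Pelayo–Tang, Lemma 4.1 (connecting lemma): in a locally connected, locally compact
Hausdorff space, two connected precompact subsets lying in the same connected component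
`C` of `X` lie in the same connected component of `L ∩ C` for some compact `L ⊇ A ∪ A′`.
-/

open Topology Set

open Topology Set

/-- Every point has arbitrarily small compact connected closed neighborhoods,
in the form of closures of connected open neighborhoods. -/
lemma exists_conn_cpt_nhd {X : Type*} [TopologicalSpace X]
    [LocallyConnectedSpace X] [LocallyCompactSpace X] [T2Space X] (y : X) :
    ∃ V : Set X, IsOpen V ∧ y ∈ V ∧ IsCompact (closure V) ∧ IsPreconnected (closure V) := by
  obtain ⟨K, hKc, hKn⟩ := exists_compact_mem_nhds y
  set V := connectedComponentIn (interior K) y with hV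
  have hyi : y ∈ interior K := mem_interior_iff_mem_nhds.mpr hKn
  have hVo : IsOpen V := isOpen_interior.connectedComponentIn
  have hyV : y ∈ V := mem_connectedComponentIn hyi
  have hVK : V ⊆ K := (connectedComponentIn_subset _ _).trans interior_subset
  have hclK : closure V ⊆ K := closure_minimal hVK hKc.isClosed
  refine ⟨V, hVo, hyV, hKc.of_isClosed_subset isClosed_closure hclK, ?_⟩
  exact (isConnected_connectedComponentIn_iff.mpr hyi).isPreconnected.closure

/-- In a locally connected, locally compact Hausdorff space, any two points of a
connected component are joined by a compact connected set inside the component. -/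
lemma exists_cpt_conn_join {X : Type*} [TopologicalSpace X]
    [LocallyConnectedSpace X] [LocallyCompactSpace X] [T2Space X] (x y : X)
    (hy : y ∈ connectedComponent x) :
    ∃ K : Set X, IsCompact K ∧ IsPreconnected K ∧ K ⊆ connectedComponent x ∧
      x ∈ K ∧ y ∈ K := by
  set C := connectedComponent x with hCdef
  set S : Set X := {z | ∃ K : Set X, IsCompact K ∧ IsPreconnected K ∧ K ⊆ C ∧ x ∈ K ∧
      K ∈ 𝓝 z} with hSdef
  -- S is open
  have hSopen : IsOpen S := by
    refine isOpen_iff_mem_nhds.mpr fun z hz => ?_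
    obtain ⟨K, hKc, hKp, hKC, hxK, hKz⟩ := hz
    filter_upwards [interior_mem_nhds.mpr hKz] with w hw
    exact ⟨K, hKc, hKp, hKC, hxK, mem_interior_iff_mem_nhds.mp hw⟩
  -- every point of S is in C
  have hSC : S ⊆ C := fun z ⟨K, _, _, hKC, _, hKz⟩ => hKC (mem_of_mem_nhds hKz)
  -- the complement within C is open-ish: show C ⊆ S ∪ T with T open disjoint
  set T : Set X := {z | ∃ V : Set X, IsOpen V ∧ z ∈ V ∧ V ∩ S = ∅} with hTdef
  have hTopen : IsOpen T := by
    refine isOpen_iff_mem_nhds.mpr fun z ⟨V, hVo, hzV, hVS⟩ => ?_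
    filter_upwards [hVo.mem_nhds hzV] with w hw
    exact ⟨V, hVo, hw, hVS⟩
  have hST : S ∩ T = ∅ := by
    ext z; simp only [mem_inter_iff, mem_empty_iff_false, iff_false, not_and]
    rintro hzS ⟨V, _, hzV, hVS⟩
    exact absurd (mem_inter hzV hzS) (by rw [hVS]; exact notMem_empty z)
  have hCST : C ⊆ S ∪ T := by
    intro z hzC
    by_cases hzS : z ∈ S
    · exact Or.inl hzS
    obtain ⟨V, hVo, hzV, hVc, hVp⟩ := exists_conn_cpt_nhd z
    have hclC : closure V ⊆ C := by
      have : closure V ⊆ connectedComponent z :=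
        hVp.subset_connectedComponent (subset_closure hzV)
      rwa [← connectedComponent_eq hzC] at this
    refine Or.inr ⟨V, hVo, hzV, ?_⟩
    by_contra hne
    obtain ⟨w, hwV, hwS⟩ := Set.nonempty_iff_ne_empty.mpr hne
    obtain ⟨K, hKc, hKp, hKC, hxK, hKw⟩ := hwS
    have hwK : w ∈ K := mem_of_mem_nhds hKw
    have hjoin : IsPreconnected (K ∪ closure V) :=
      hKp.union w hwK (subset_closure hwV) hVp
    have : z ∈ S := by
      refine ⟨K ∪ closure V, hKc.union hVc, hjoin, union_subset hKC hclC, Or.inl hxK, ?_⟩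
      exact Filter.mem_of_superset (mem_nhds_iff.mpr ⟨V, subset_closure, hVo, hzV⟩)
        subset_union_right
    exact hzS this
  have hxS : x ∈ S := by
    obtain ⟨V, hVo, hxV, hVc, hVp⟩ := exists_conn_cpt_nhd x
    have hclC : closure V ⊆ C :=
      hVp.subset_connectedComponent (subset_closure hxV)
    exact ⟨closure V, hVc, hVp, hclC, subset_closure hxV,
      mem_nhds_iff.mpr ⟨V, subset_closure, hVo, hxV⟩⟩
  -- conclude y ∈ S by preconnectedness of C
  have hyS : y ∈ S := by
    by_contra hyS
    have hyT : y ∈ T := (hCST hy).resolve_left hyS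
    obtain ⟨p, hpC, hpS, hpT⟩ :=
      isPreconnected_connectedComponent S T hSopen hTopen hCST
        ⟨x, mem_connectedComponent, hxS⟩ ⟨y, hy, hyT⟩
    exact absurd (mem_inter hpS hpT) (by rw [hST]; exact notMem_empty p)
  obtain ⟨K, hKc, hKp, hKC, hxK, hKy⟩ := hyS
  exact ⟨K, hKc, hKp, hKC, hxK, mem_of_mem_nhds hKy⟩

/-- **Lemma 4.1 (connecting lemma).** -/
theorem connecting_lemma {X : Type*} [TopologicalSpace X]
    [LocallyConnectedSpace X] [LocallyCompactSpace X] [T2Space X]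
    (A A' : Set X) (hA : IsConnected A) (hA' : IsConnected A')
    (hAc : IsCompact (closure A)) (hA'c : IsCompact (closure A'))
    (C : Set X) (hC : ∃ x : X, C = connectedComponent x)
    (hAC : A ⊆ C) (hA'C : A' ⊆ C) :
    ∃ L : Set X, IsCompact L ∧ A ∪ A' ⊆ L ∧
      ∃ D ∈ connCompsIn (L ∩ C), A ⊆ D ∧ A' ⊆ D := by
  obtain ⟨c, rfl⟩ := hC
  obtain ⟨a, haA⟩ := hA.nonempty
  obtain ⟨a', ha'A⟩ := hA'.nonempty
  have haC : a ∈ connectedComponent c := hAC haA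
  have ha'C : a' ∈ connectedComponent c := hA'C ha'A
  have hCa : connectedComponent a = connectedComponent c := (connectedComponent_eq haC).symm
  obtain ⟨K, hKc, hKp, hKC, haK, ha'K⟩ := exists_cpt_conn_join a a' (by rw [hCa]; exact ha'C)
  rw [hCa] at hKC
  set L : Set X := closure A ∪ closure A' ∪ K with hLdef
  have hLc : IsCompact L := (hAc.union hA'c).union hKc
  have hclA : closure A ⊆ connectedComponent c :=
    closure_minimal hAC isClosed_connectedComponent
  have hclA' : closure A' ⊆ connectedComponent c :=
    closure_minimal hA'C isClosed_connectedComponent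
  have hLC : L ⊆ connectedComponent c := union_subset (union_subset hclA hclA') hKC
  have hLCeq : L ∩ connectedComponent c = L := inter_eq_left.mpr hLC
  have haL : a ∈ L := Or.inl (Or.inl (subset_closure haA))
  refine ⟨L, hLc, ?_, connectedComponentIn L a, ?_, ?_, ?_⟩
  · exact union_subset ((subset_closure).trans (by intro z hz; exact Or.inl (Or.inl hz)))
      ((subset_closure).trans (by intro z hz; exact Or.inl (Or.inr hz)))
  · exact ⟨a, by rw [hLCeq]; exact haL, by rw [hLCeq]⟩
  · have : closure A ⊆ connectedComponentIn L a :=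
      hA.isPreconnected.closure.subset_connectedComponentIn (subset_closure haA)
        (fun z hz => Or.inl (Or.inl hz))
    exact subset_closure.trans this
  · have hM : IsPreconnected (K ∪ closure A') :=
      hKp.union a' ha'K (subset_closure ha'A) hA'.isPreconnected.closure
    have : K ∪ closure A' ⊆ connectedComponentIn L a :=
      hM.subset_connectedComponentIn (Or.inl haK)
        (union_subset (fun z hz => Or.inr hz) (fun z hz => Or.inl (Or.inr hz)))
    exact fun z hz => this (Or.inr (subset_closure hz))
end
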